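/- For every χ ∈ (0,1) there exist a constant C > 0 and x_0 > 2 such that for all x ≥ x_0 one has |κ'(x) − λ(x)/x²| ≤ C λ(x) x^{−2−χ}; equivalently, λ(x) = x² κ'(x)(1 + O(x^{−χ})) as x → ∞. -/

import Mathlib

open MeasureTheory Real Set Filter Topology

/-- The integrand of `lam`, with its continuous extension `x(x-1)/2` at `p = 0`. -/
noncomputable def lamInt (x p : ℝ) : ℝ :=
  if p = 0 then x * (x - 1) / 2
  else (1 - (1 - p) ^ x - x * p * (1 - p) ^ (x - 1)) / p ^ 2

/-- The total jump rate function `λ(x)` of the `Λ`-coalescent. -/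
noncomputable def lam (Λ : Measure ℝ) (x : ℝ) : ℝ :=
  ∫ p in Set.Icc (0:ℝ) 1, lamInt x p ∂Λ

/-- The integrand of `mu`, with its continuous extension `x(x-1)/2` at `p = 0`. -/
noncomputable def muInt (x p : ℝ) : ℝ :=
  if p = 0 then x * (x - 1) / 2
  else (x * p - 1 + (1 - p) ^ x) / p ^ 2

/-- The rate of decrease `μ(x)` of the `Λ`-coalescent. -/
noncomputable def mu (Λ : Measure ℝ) (x : ℝ) : ℝ :=
  ∫ p in Set.Icc (0:ℝ) 1, muInt x p ∂Λ

/-- The rate of decrease per capita `κ(x) = μ(x)/x`. -/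
noncomputable def kappa (Λ : Measure ℝ) (x : ℝ) : ℝ := mu Λ x / x

/-!
Differentiating under the integral sign gives `x² κ'(x) - λ(x) = x μ'(x) - μ(x) - λ(x)`, whose
integrand is `x (1-p)^(x-1) (p + (1-p) log (1-p)) / p²`. As `0 ≤ p + (1-p) log (1-p) ≤ p²`, this
lies between `0` and `x (1-p)^(x-2)`, while the integrand of `λ` is at least
`x (x-1)/2 · (1-p)^(x-2)`. Hence `0 ≤ x² κ'(x) - λ(x) ≤ 2 λ(x) / (x-1)`: the error is even
`O(λ(x) x⁻³)`.
-/

lemma one_sub_mul_le_one_sub_rpow {p x : ℝ} (hp : p ≤ 1) (hx : 1 ≤ x) :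
    1 - x * p ≤ (1 - p) ^ x := by
  simpa [← sub_eq_add_neg] using one_add_mul_self_le_rpow_one_add (s := -p) (by linarith) hx

lemma neg_mul_log_le_one_sub {t : ℝ} (ht : 0 < t) : -(t * log t) ≤ 1 - t := by
  have h := mul_le_mul_of_nonneg_left (one_sub_inv_le_log_of_pos ht) ht.le
  rw [mul_sub, mul_inv_cancel₀ ht.ne'] at h
  linarith

lemma hasDerivAt_one_sub_rpow (c : ℝ) {p : ℝ} (hp : p < 1) :
    HasDerivAt (fun p : ℝ => (1 - p) ^ c) (-(c * (1 - p) ^ (c - 1))) p :=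
  (((hasDerivAt_id' p).const_sub 1).rpow_const (Or.inl (sub_pos.2 hp).ne')).congr_deriv (by ring)

noncomputable def muDerivInt (x p : ℝ) : ℝ :=
  if p = 0 then x - 1 / 2
  else (p + (1 - p) ^ x * log (1 - p)) / p ^ 2

lemma measurable_lamInt (x : ℝ) : Measurable (lamInt x) :=
  Measurable.ite (measurableSet_singleton 0) measurable_const (by fun_prop)

lemma measurable_muInt (x : ℝ) : Measurable (muInt x) :=
  Measurable.ite (measurableSet_singleton 0) measurable_const (by fun_prop)

lemma measurable_muDerivInt (x : ℝ) : Measurable (muDerivInt x) :=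
  Measurable.ite (measurableSet_singleton 0) measurable_const (by fun_prop)

lemma muInt_one (p : ℝ) : muInt 1 p = 0 := by
  unfold muInt
  split_ifs <;> simp

lemma hasDerivAt_muInt {p y : ℝ} (hp : p ∈ Icc (0:ℝ) 1) (hy : 0 < y) :
    HasDerivAt (fun z => muInt z p) (muDerivInt y p) y := by
  unfold muInt muDerivInt
  rcases hp.1.eq_or_lt with rfl | hp0
  · simp only [if_true]
    exact (((hasDerivAt_id' y).mul ((hasDerivAt_id' y).sub_const 1)).div_const 2).congr_deriv
      (by ring)
  simp only [hp0.ne', if_false]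
  rcases hp.2.eq_or_lt with rfl | hp1
  · have hev : (fun z => (z * 1 - 1 + (1 - 1 : ℝ) ^ z) / 1 ^ 2) =ᶠ[𝓝 y] fun z => z - 1 := by
      filter_upwards [eventually_ne_nhds hy.ne'] with z hz
      simp [zero_rpow hz]
    simpa using ((hasDerivAt_id y).sub_const 1).congr_of_eventuallyEq hev
  · exact (((((hasDerivAt_id' y).mul_const p).sub_const 1).add
      (hasStrictDerivAt_const_rpow (sub_pos.2 hp1) y).hasDerivAt).div_const (p ^ 2)).congr_deriv
      (by ring)

lemma muDerivInt_mem_Icc {y p : ℝ} (hy : 1 ≤ y) (hp : p ∈ Icc (0:ℝ) 1) :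
    muDerivInt y p ∈ Icc 0 y := by
  unfold muDerivInt
  rcases hp.1.eq_or_lt with rfl | hp0
  · simp only [if_true]; constructor <;> linarith
  rw [if_neg hp0.ne']
  rcases hp.2.eq_or_lt with rfl | hp1
  · simp [zero_rpow (by linarith : y ≠ 0)]
    linarith
  have hq : 0 < 1 - p := by linarith
  have hlog : log (1 - p) ≤ -p := by linarith [log_le_sub_one_of_pos hq]
  have hqy : (1 - p) ^ y ≤ 1 - p := by
    simpa using rpow_le_rpow_of_exponent_ge hq (by linarith) hy
  have hqy0 : 0 ≤ (1 - p) ^ y := rpow_nonneg hq.le y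
  have hlo : 0 ≤ p + (1 - p) ^ y * log (1 - p) := by
    have := mul_le_mul_of_nonneg_right hqy (neg_nonneg.2 (log_nonpos hq.le (by linarith)))
    nlinarith [neg_mul_log_le_one_sub hq]
  have hhi : p + (1 - p) ^ y * log (1 - p) ≤ y * p ^ 2 := by
    nlinarith [mul_le_mul_of_nonneg_left hlog hqy0, one_sub_mul_le_one_sub_rpow hp.2 hy]
  exact ⟨by positivity, (div_le_iff₀ (by positivity)).2 hhi⟩

lemma abs_muInt_le {x p : ℝ} (hx : 1 ≤ x) (hp : p ∈ Icc (0:ℝ) 1) :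
    |muInt x p| ≤ x * (x - 1) := by
  have h := norm_image_sub_le_of_norm_deriv_le_segment' (f := fun z => muInt z p) (C := x)
    (fun z hz => (hasDerivAt_muInt hp (by linarith [hz.1])).hasDerivWithinAt)
    (fun z hz => by
      have h := muDerivInt_mem_Icc hz.1 hp
      rw [norm_of_nonneg h.1]
      linarith [h.2, hz.2])
    x ⟨hx, le_rfl⟩
  simpa [muInt_one] using h

lemma mul_sq_mul_rpow_le {x p : ℝ} (hx : 2 ≤ x) (hp : p ∈ Icc (0:ℝ) 1) :
    x * (x - 1) / 2 * p ^ 2 * (1 - p) ^ (x - 2) ≤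
      1 - (1 - p) ^ x - x * p * (1 - p) ^ (x - 1) := by
  let f : ℝ → ℝ := fun p => 1 - (1 - p) ^ x - x * p * (1 - p) ^ (x - 1) -
    x * (x - 1) / 2 * p ^ 2 * (1 - p) ^ (x - 2)
  have hmono : MonotoneOn f (Icc 0 1) := by
    refine monotoneOn_of_hasDerivWithinAt_nonneg
      (f' := fun p => x * (x - 1) * (x - 2) / 2 * p ^ 2 * (1 - p) ^ (x - 3)) (convex_Icc 0 1)
      (by fun_prop (disch := linarith)) (fun p hp => ?_) (fun p hp => ?_)
    · rw [interior_Icc] at hp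
      have h1 := (hasDerivAt_one_sub_rpow x hp.2).const_sub 1
      have h2 := ((hasDerivAt_id' p).const_mul x).mul (hasDerivAt_one_sub_rpow (x - 1) hp.2)
      have h3 := ((hasDerivAt_pow 2 p).const_mul (x * (x - 1) / 2)).mul
        (hasDerivAt_one_sub_rpow (x - 2) hp.2)
      refine (((h1.sub h2).sub h3).congr_deriv ?_).hasDerivWithinAt
      rw [show x - 1 - 1 = x - 2 by ring, show x - 2 - 1 = x - 3 by ring]
      ring
    · rw [interior_Icc] at hp
      have hc : 0 ≤ x * (x - 1) * (x - 2) :=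
        mul_nonneg (mul_nonneg (by linarith) (by linarith)) (by linarith)
      exact mul_nonneg (mul_nonneg (by positivity) (sq_nonneg p))
        (rpow_nonneg (sub_nonneg.2 hp.2.le) _)
  have h := hmono (left_mem_Icc.2 zero_le_one) hp hp.1
  simp only [f, sub_zero, one_rpow] at h
  linarith

lemma mul_rpow_le_lamInt {x p : ℝ} (hx : 2 ≤ x) (hp : p ∈ Icc (0:ℝ) 1) :
    x * (x - 1) / 2 * (1 - p) ^ (x - 2) ≤ lamInt x p := by
  unfold lamInt
  rcases hp.1.eq_or_lt with rfl | hp0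
  · simp
  rw [if_neg hp0.ne', le_div_iff₀ (by positivity)]
  linarith [mul_sq_mul_rpow_le hx hp]

lemma lamInt_nonneg {x p : ℝ} (hx : 2 ≤ x) (hp : p ∈ Icc (0:ℝ) 1) : 0 ≤ lamInt x p :=
  le_trans (mul_nonneg (by nlinarith) (rpow_nonneg (sub_nonneg.2 hp.2) _))
    (mul_rpow_le_lamInt hx hp)

noncomputable def gapInt (x p : ℝ) : ℝ := x * muDerivInt x p - muInt x p - lamInt x p

lemma gapInt_mem_Icc {x p : ℝ} (hx : 2 ≤ x) (hp : p ∈ Icc (0:ℝ) 1) :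
    gapInt x p ∈ Icc 0 (x * (1 - p) ^ (x - 2)) := by
  unfold gapInt muDerivInt muInt lamInt
  rcases hp.1.eq_or_lt with rfl | hp0
  · simp only [if_true, sub_zero, one_rpow]
    constructor <;> nlinarith
  simp only [hp0.ne', if_false]
  rcases hp.2.eq_or_lt with rfl | hp1
  · simp [zero_rpow (by linarith : x ≠ 0), zero_rpow (by linarith : x - 1 ≠ 0)]
    positivity
  have hq : 0 < 1 - p := by linarith
  set L := log (1 - p)
  have hlo : 0 ≤ p + (1 - p) * L := by nlinarith [neg_mul_log_le_one_sub hq]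
  have hhi : p + (1 - p) * L ≤ p ^ 2 := by
    nlinarith [log_le_sub_one_of_pos hq]
  have hsplit : (1 - p) ^ x = (1 - p) ^ (x - 1) * (1 - p) := by
    rw [← rpow_add_one hq.ne', sub_add_cancel]
  have hgap : x * ((p + (1 - p) ^ x * L) / p ^ 2) - (x * p - 1 + (1 - p) ^ x) / p ^ 2 -
      (1 - (1 - p) ^ x - x * p * (1 - p) ^ (x - 1)) / p ^ 2 =
      x * (1 - p) ^ (x - 1) * ((p + (1 - p) * L) / p ^ 2) := by
    rw [hsplit]
    field_simp
    ring
  have hpow : (1 - p) ^ (x - 1) ≤ (1 - p) ^ (x - 2) :=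
    rpow_le_rpow_of_exponent_ge hq (by linarith) (by linarith)
  have hfrac : (p + (1 - p) * L) / p ^ 2 ≤ 1 := (div_le_one (by positivity)).2 hhi
  rw [hgap]
  refine ⟨by positivity, ?_⟩
  calc x * (1 - p) ^ (x - 1) * ((p + (1 - p) * L) / p ^ 2)
      ≤ x * (1 - p) ^ (x - 1) * 1 := by gcongr
    _ ≤ x * (1 - p) ^ (x - 2) := by rw [mul_one]; gcongr

lemma gapInt_le {x p : ℝ} (hx : 2 ≤ x) (hp : p ∈ Icc (0:ℝ) 1) :
    gapInt x p ≤ 2 / (x - 1) * lamInt x p := by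
  calc gapInt x p ≤ x * (1 - p) ^ (x - 2) := (gapInt_mem_Icc hx hp).2
    _ = 2 / (x - 1) * (x * (x - 1) / 2 * (1 - p) ^ (x - 2)) := by
      field_simp [(by linarith : x - 1 ≠ 0)]
    _ ≤ 2 / (x - 1) * lamInt x p := by
      gcongr
      · exact div_nonneg zero_le_two (by linarith)
      · exact mul_rpow_le_lamInt hx hp

lemma lamInt_le {x p : ℝ} (hx : 2 ≤ x) (hp : p ∈ Icc (0:ℝ) 1) :
    lamInt x p ≤ x * x + x * (x - 1) := by
  have hgap := (gapInt_mem_Icc hx hp).1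
  have hD := (muDerivInt_mem_Icc (y := x) (by linarith) hp).2
  have hmu := neg_le_of_abs_le (abs_muInt_le (x := x) (by linarith) hp)
  unfold gapInt at hgap
  nlinarith

lemma lam_nonneg (Λ : Measure ℝ) {x : ℝ} (hx : 2 ≤ x) : 0 ≤ lam Λ x :=
  setIntegral_nonneg measurableSet_Icc fun _ hp => lamInt_nonneg hx hp

section FiniteMeasure

variable (Λ : Measure ℝ) [IsFiniteMeasure Λ] {x : ℝ}

lemma integrableOn_Icc_of_abs_le {f : ℝ → ℝ} (hf : Measurable f) {C : ℝ}
    (hC : ∀ p ∈ Icc (0:ℝ) 1, |f p| ≤ C) : IntegrableOn f (Icc 0 1) Λ :=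
  Measure.integrableOn_of_bounded (measure_ne_top _ _) hf.aestronglyMeasurable
    ((ae_restrict_mem measurableSet_Icc).mono hC)

lemma integrableOn_muInt (hx : 1 ≤ x) : IntegrableOn (muInt x) (Icc 0 1) Λ :=
  integrableOn_Icc_of_abs_le Λ (measurable_muInt x) fun _ hp => abs_muInt_le hx hp

lemma integrableOn_muDerivInt (hx : 1 ≤ x) : IntegrableOn (muDerivInt x) (Icc 0 1) Λ :=
  integrableOn_Icc_of_abs_le Λ (measurable_muDerivInt x) fun _ hp =>
    abs_le.2 ⟨by linarith [(muDerivInt_mem_Icc hx hp).1], (muDerivInt_mem_Icc hx hp).2⟩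

lemma integrableOn_lamInt (hx : 2 ≤ x) : IntegrableOn (lamInt x) (Icc 0 1) Λ :=
  integrableOn_Icc_of_abs_le Λ (measurable_lamInt x) fun _ hp => by
    rw [abs_of_nonneg (lamInt_nonneg hx hp)]
    exact lamInt_le hx hp

lemma hasDerivAt_mu (hx : 1 < x) :
    HasDerivAt (mu Λ) (∫ p in Icc (0:ℝ) 1, muDerivInt x p ∂Λ) x := by
  have hball : ∀ y ∈ Metric.ball x (x - 1), 1 < y ∧ y < 2 * x := fun y hy => by
    rw [Metric.mem_ball, dist_eq, abs_sub_lt_iff] at hy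
    constructor <;> linarith
  refine (hasDerivAt_integral_of_dominated_loc_of_deriv_le (bound := fun _ => 2 * x)
    (Metric.ball_mem_nhds x (by linarith : 0 < x - 1))
    (.of_forall fun y => (measurable_muInt y).aestronglyMeasurable)
    (integrableOn_muInt Λ hx.le) (measurable_muDerivInt x).aestronglyMeasurable ?_
    (integrable_const _) ?_).2
  · filter_upwards [ae_restrict_mem measurableSet_Icc] with p hp y hy
    have h := muDerivInt_mem_Icc (hball y hy).1.le hp
    rw [norm_of_nonneg h.1]
    linarith [h.2, (hball y hy).2]
  · filter_upwards [ae_restrict_mem measurableSet_Icc] with p hp y hy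
    exact hasDerivAt_muInt hp (by linarith [(hball y hy).1])

lemma integral_gapInt (hx : 2 ≤ x) :
    ∫ p in Icc (0:ℝ) 1, gapInt x p ∂Λ =
      x * ∫ p in Icc (0:ℝ) 1, muDerivInt x p ∂Λ - mu Λ x - lam Λ x := by
  have hD : IntegrableOn (fun p => x * muDerivInt x p) (Icc 0 1) Λ :=
    (integrableOn_muDerivInt Λ (by linarith)).const_mul x
  have hDmu : IntegrableOn (fun p => x * muDerivInt x p - muInt x p) (Icc 0 1) Λ :=
    hD.sub (integrableOn_muInt Λ (by linarith))
  simp only [gapInt]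
  rw [integral_sub hDmu (integrableOn_lamInt Λ hx),
    integral_sub hD (integrableOn_muInt Λ (by linarith)), integral_const_mul, mu, lam]

lemma deriv_kappa_sub_lam (hx : 2 ≤ x) :
    deriv (kappa Λ) x - lam Λ x / x ^ 2 = (∫ p in Icc (0:ℝ) 1, gapInt x p ∂Λ) / x ^ 2 := by
  have hkappa : HasDerivAt (kappa Λ)
      (((∫ p in Icc (0:ℝ) 1, muDerivInt x p ∂Λ) * x - mu Λ x * 1) / x ^ 2) x :=
    (hasDerivAt_mu Λ (by linarith)).div (hasDerivAt_id' x) (by linarith)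
  rw [hkappa.deriv, integral_gapInt Λ hx]
  ring

lemma integral_gapInt_mem_Icc (hx : 2 ≤ x) :
    ∫ p in Icc (0:ℝ) 1, gapInt x p ∂Λ ∈ Icc 0 (2 / (x - 1) * lam Λ x) := by
  refine ⟨setIntegral_nonneg measurableSet_Icc fun _ hp => (gapInt_mem_Icc hx hp).1, ?_⟩
  have hgap : IntegrableOn (gapInt x) (Icc 0 1) Λ :=
    (((integrableOn_muDerivInt Λ (by linarith)).const_mul x).sub
      (integrableOn_muInt Λ (by linarith))).sub (integrableOn_lamInt Λ hx)
  rw [lam, ← integral_const_mul]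
  exact setIntegral_mono_on hgap ((integrableOn_lamInt Λ hx).const_mul _) measurableSet_Icc
    fun _ hp => gapInt_le hx hp

end FiniteMeasure

theorem kappa_deriv_asymp_general (Λ : Measure ℝ) [IsFiniteMeasure Λ] :
    ∀ χ : ℝ, 0 < χ → χ < 1 →
      ∃ C : ℝ, 0 < C ∧ ∃ x₀ : ℝ, 2 < x₀ ∧ ∀ x : ℝ, x₀ ≤ x →
        |deriv (kappa Λ) x - lam Λ x / x ^ 2| ≤ C * lam Λ x * x ^ (-2 - χ) := by
  intro χ _ hχ
  refine ⟨4, by norm_num, 3, by norm_num, fun x hx => ?_⟩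
  have hx0 : 0 < x := by linarith
  have hgap := integral_gapInt_mem_Icc Λ (by linarith : 2 ≤ x)
  have hlam := lam_nonneg Λ (by linarith : 2 ≤ x)
  have hpow : (x ^ 3)⁻¹ ≤ x ^ (-2 - χ) := by
    rw [← rpow_natCast, ← rpow_neg hx0.le]
    exact rpow_le_rpow_of_exponent_le (by linarith) (by push_cast; linarith)
  have hfrac : 2 / ((x - 1) * x ^ 2) ≤ 4 * (x ^ 3)⁻¹ := by
    rw [← div_eq_mul_inv, div_le_div_iff₀ (by nlinarith) (by positivity)]
    nlinarith
  rw [deriv_kappa_sub_lam Λ (by linarith), abs_of_nonneg (div_nonneg hgap.1 (sq_nonneg x))]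
  calc (∫ p in Icc (0:ℝ) 1, gapInt x p ∂Λ) / x ^ 2
      ≤ 2 / (x - 1) * lam Λ x / x ^ 2 := by gcongr; exact hgap.2
    _ = 2 / ((x - 1) * x ^ 2) * lam Λ x := by field_simp
    _ ≤ 4 * (x ^ 3)⁻¹ * lam Λ x := by gcongr
    _ ≤ 4 * x ^ (-2 - χ) * lam Λ x := by gcongr
    _ = 4 * lam Λ x * x ^ (-2 - χ) := by ring

/-- For every `χ ∈ (0,1)` there are `C > 0` and `x₀ > 2` such that for all `x ≥ x₀`,
`|κ'(x) − λ(x)/x²| ≤ C λ(x) x^{−2−χ}`; that is, `λ(x) = x² κ'(x)(1 + O(x^{−χ}))`. -/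
theorem kappa_deriv_asymp (Λ : Measure ℝ) [IsFiniteMeasure Λ] (hΛ : Λ ≠ 0)
    (hsupp : Λ (Set.Icc (0:ℝ) 1)ᶜ = 0) :
    ∀ χ : ℝ, 0 < χ → χ < 1 →
      ∃ C : ℝ, 0 < C ∧ ∃ x₀ : ℝ, 2 < x₀ ∧ ∀ x : ℝ, x₀ ≤ x →
        |deriv (kappa Λ) x - lam Λ x / x ^ 2| ≤ C * lam Λ x * x ^ (-2 - χ) :=
  kappa_deriv_asymp_general Λ
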